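/- Let x∈(−∞,1)∖{0} (in the application, x=−A/(2B) with A>0 and B≠0). Define F₁(t)=1−t, P₁(t)=t²−(3/(2x))t−(3/2)(1−1/x) (so P₁(1)=−1/2), and ℋ(t)=(x/(3(1−xt)))·[P₁(t)/P₁(1)−F₁(xt)/F₁(x)+(2x·F₁(xt)/P₁(1))·∫_t¹ τ^{−2}F₁(xτ)^{−2}·(∫₀^τ s·F₁(xs)·(1−xs)^{−1}·P₁(s)ds)dτ]−t+P₁(t)/P₁(1) for t∈[0,1]. Then ∫₀¹ s·F₁(xs)·(1−xs)^{−1}·ℋ(s)ds=(x−1)/(2x). In particular this integral is nonzero (the transversality condition for the 1-fold mode holds) if and only if x∉{0,1}. -/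

import Mathlib

open MeasureTheory Real Set

/-- `F₁(t) = 1 - t`, the `n = 1` hypergeometric function `F(a₁,b₁;c₁;t)`. -/
noncomputable def F1 (t : ℝ) : ℝ := 1 - t

/-- `P₁(t) = t² - (3/(2x))t - (3/2)(1 - 1/x)`. -/
noncomputable def P1 (x t : ℝ) : ℝ := t ^ 2 - 3 / (2 * x) * t - 3 / 2 * (1 - 1 / x)

/-- The transversality integrand `ℋ` for the 1-fold mode. -/
noncomputable def Hfun (x t : ℝ) : ℝ :=
  x / (3 * (1 - x * t)) *
      (P1 x t / P1 x 1 - F1 (x * t) / F1 x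
        + 2 * x * F1 (x * t) / P1 x 1 *
            ∫ τ in t..1, (τ ^ 2 * F1 (x * τ) ^ 2)⁻¹ *
              ∫ s in (0:ℝ)..τ, s * F1 (x * s) * (1 - x * s)⁻¹ * P1 x s)
    - t + P1 x t / P1 x 1

/-! Since `F₁(xs) = 1 - xs`, the weight `s F₁(xs) (1 - xs)⁻¹` is just `s` on `[0, 1]`, so every
integral in `ℋ` is elementary: the inner one is a polynomial, the middle one a rational function of
`t`, and `ℋ` collapses to `-2 P₁ - 1`. The transversality integral is then
`-2 ∫₀¹ s P₁(s) ds - 1/2 = (x - 1)/(2x)`. -/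

lemma one_sub_mul_pos {x s : ℝ} (hx : x < 1) (hs : s ∈ Icc (0:ℝ) 1) : 0 < 1 - x * s := by
  rcases le_or_gt x 0 with hx' | hx'
  · nlinarith [hs.1]
  · nlinarith [hs.2]

lemma mul_F1_mul_inv_eq {x s : ℝ} (h : 1 - x * s ≠ 0) : s * F1 (x * s) * (1 - x * s)⁻¹ = s := by
  rw [F1, mul_assoc, mul_inv_cancel₀ h, mul_one]

lemma P1_one {x : ℝ} (hx0 : x ≠ 0) : P1 x 1 = -(1 / 2) := by
  rw [P1]; field_simp; ring

lemma integral_mul_P1 (x τ : ℝ) :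
    ∫ s in (0:ℝ)..τ, s * P1 x s = τ ^ 4 / 4 - τ ^ 3 / (2 * x) - 3 / 4 * (1 - 1 / x) * τ ^ 2 := by
  have hderiv : ∀ s ∈ uIcc (0:ℝ) τ, HasDerivAt
      (fun s => s ^ 4 / 4 - s ^ 3 / (2 * x) - 3 / 4 * (1 - 1 / x) * s ^ 2) (s * P1 x s) s := by
    intro s _
    refine ((((hasDerivAt_pow 4 s).div_const 4).sub ((hasDerivAt_pow 3 s).div_const (2 * x))).sub
      ((hasDerivAt_pow 2 s).const_mul (3 / 4 * (1 - 1 / x)))).congr_deriv ?_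
    simp only [P1]; ring
  rw [intervalIntegral.integral_eq_sub_of_hasDerivAt hderiv
    (by unfold P1; exact Continuous.intervalIntegrable (by fun_prop) _ _)]
  ring

lemma integral_weight_mul_P1 {x τ : ℝ} (hx : x < 1) (hτ : τ ∈ Icc (0:ℝ) 1) :
    ∫ s in (0:ℝ)..τ, s * F1 (x * s) * (1 - x * s)⁻¹ * P1 x s
      = τ ^ 4 / 4 - τ ^ 3 / (2 * x) - 3 / 4 * (1 - 1 / x) * τ ^ 2 := by
  rw [← integral_mul_P1]
  refine intervalIntegral.integral_congr fun s hs => ?_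
  rw [uIcc_of_le hτ.1] at hs
  have hs01 : s ∈ Icc (0:ℝ) 1 := ⟨hs.1, hs.2.trans hτ.2⟩
  rw [mul_F1_mul_inv_eq (one_sub_mul_pos hx hs01).ne']

lemma integral_inv_sq_mul_integral_weight_mul_P1 {x t : ℝ} (hx : x < 1) (hx0 : x ≠ 0) (ht : t ∈ Icc (0:ℝ) 1) :
    ∫ τ in t..1, (τ ^ 2 * F1 (x * τ) ^ 2)⁻¹ *
        ∫ s in (0:ℝ)..τ, s * F1 (x * s) * (1 - x * s)⁻¹ * P1 x s
      = (1 - t) / (4 * x ^ 2)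
        + (3 * x - 3 * x ^ 2 - 1) / (4 * x ^ 3) * ((1 - x)⁻¹ - (1 - x * t)⁻¹) := by
  have hsub : uIcc t 1 ⊆ Icc 0 1 := by
    rw [uIcc_of_le ht.2]; exact Icc_subset_Icc ht.1 le_rfl
  set c := (3 * x - 3 * x ^ 2 - 1) / (4 * x ^ 2)
  -- `x²τ² - 2xτ - 3x² + 3x = (1 - xτ)² + (3x - 3x² - 1)`, after cancelling `τ²` (for `τ ≠ 0`)
  have hintegrand : ∀ᵐ τ ∂volume, τ ∈ uIoc t 1 →
      (τ ^ 2 * F1 (x * τ) ^ 2)⁻¹ * ∫ s in (0:ℝ)..τ, s * F1 (x * s) * (1 - x * s)⁻¹ * P1 x s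
        = 1 / (4 * x ^ 2) + c * ((1 - x * τ) ^ 2)⁻¹ := by
    filter_upwards [compl_mem_ae_iff.2 (measure_singleton (0:ℝ))] with τ hτ0 hτ
    have hτ01 := hsub (uIoc_subset_uIcc hτ)
    have hne : 1 - τ * x ≠ 0 := by rw [mul_comm]; exact (one_sub_mul_pos hx hτ01).ne'
    rw [integral_weight_mul_P1 hx hτ01, F1]
    simp only [c]
    field_simp [show τ ≠ 0 from hτ0]
    ring
  have hderiv : ∀ τ ∈ uIcc t 1, HasDerivAt (fun τ => τ / (4 * x ^ 2) + c / x * (1 - x * τ)⁻¹)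
      (1 / (4 * x ^ 2) + c * ((1 - x * τ) ^ 2)⁻¹) τ := by
    intro τ hτ
    have hlin : HasDerivAt (fun τ : ℝ => 1 - x * τ) (-x) τ := by
      simpa using ((hasDerivAt_id τ).const_mul x).const_sub 1
    refine (((hasDerivAt_id τ).div_const (4 * x ^ 2)).add
      ((hlin.inv (one_sub_mul_pos hx (hsub hτ)).ne').const_mul (c / x))).congr_deriv ?_
    field_simp
  have hcont : ContinuousOn (fun τ => 1 / (4 * x ^ 2) + c * ((1 - x * τ) ^ 2)⁻¹) (uIcc t 1) :=
    continuousOn_const.add <| continuousOn_const.mul <| (by fun_prop : Continuous _).continuousOn.inv₀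
      fun τ hτ => (pow_pos (one_sub_mul_pos hx (hsub hτ)) 2).ne'
  rw [intervalIntegral.integral_congr_ae hintegrand,
    intervalIntegral.integral_eq_sub_of_hasDerivAt hderiv hcont.intervalIntegrable]
  simp only [c]
  field_simp
  ring

lemma Hfun_eq {x t : ℝ} (hx : x < 1) (hx0 : x ≠ 0) (ht : t ∈ Icc (0:ℝ) 1) :
    Hfun x t = -2 * P1 x t - 1 := by
  have hxt : 1 - x * t ≠ 0 := (one_sub_mul_pos hx ht).ne'
  have hx1 : 1 - x ≠ 0 := by linarith
  rw [Hfun, integral_inv_sq_mul_integral_weight_mul_P1 hx hx0 ht, P1_one hx0]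
  simp only [F1, P1]
  field_simp
  ring

lemma integral_weight_mul_Hfun {x : ℝ} (hx : x < 1) (hx0 : x ≠ 0) :
    ∫ s in (0:ℝ)..1, s * F1 (x * s) * (1 - x * s)⁻¹ * Hfun x s = (x - 1) / (2 * x) := by
  have hintegrand : ∀ s ∈ uIcc (0:ℝ) 1,
      s * F1 (x * s) * (1 - x * s)⁻¹ * Hfun x s = -2 * (s * P1 x s) - s := by
    intro s hs
    rw [uIcc_of_le zero_le_one] at hs
    rw [mul_F1_mul_inv_eq (one_sub_mul_pos hx hs).ne', Hfun_eq hx hx0 hs]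
    ring
  have hint : IntervalIntegrable (fun s => s * P1 x s) volume 0 1 := by
    unfold P1; exact Continuous.intervalIntegrable (by fun_prop) _ _
  rw [intervalIntegral.integral_congr hintegrand, intervalIntegral.integral_sub
    (hint.const_mul _) intervalIntegral.intervalIntegrable_id, intervalIntegral.integral_const_mul,
    integral_mul_P1, integral_id]
  field_simp
  ring

/-- the explicit value `(x-1)/(2x)` of the transversality integral for the
1-fold mode; in particular it is nonzero if and only if `x ∉ {0,1}`. -/
theorem onefold_transversality (x : ℝ) (hx : x < 1) (hx0 : x ≠ 0) :
    (∫ s in (0:ℝ)..1, s * F1 (x * s) * (1 - x * s)⁻¹ * Hfun x s) = (x - 1) / (2 * x) ∧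
    ((∫ s in (0:ℝ)..1, s * F1 (x * s) * (1 - x * s)⁻¹ * Hfun x s) ≠ 0 ↔
      x ≠ 0 ∧ x ≠ 1) := by
  rw [integral_weight_mul_Hfun hx hx0, div_ne_zero_iff, sub_ne_zero, mul_ne_zero_iff]
  exact ⟨rfl, fun h => ⟨h.2.2, h.1⟩, fun h => ⟨h.2, two_ne_zero, h.1⟩⟩
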